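/- Let γ > 0, c ≤ 0 and d be real constants, and let f : ℝ → ℝ be a twice continuously differentiable 2π-periodic function satisfying γ·f''(x)/(1+f'(x)²)^{3/2} + c·f(x) = d for every x ∈ ℝ. Then f is constant. -/

import Mathlib

/-!
A continuous periodic function attains its maximum at some `x₀` and its minimum at some `x₁`, where
`f'' ≤ 0` and `f'' ≥ 0` respectively; since the curvature has the sign of `f''`, the equation
gives `c f(x₀) ≥ d ≥ c f(x₁)`. For `c < 0` this says `max f ≤ min f`. For `c = 0` it forces
`d = 0`, so `f'' ≡ 0`; then `f'` is constant and vanishes at `x₀`.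
-/

open Filter Topology Set

/-- If `f'' a > 0`, the second derivative test makes `a` a local minimum as well, so `f` is
locally constant at `a` and `f'' a = 0`. -/
theorem IsLocalMax.deriv_deriv_nonpos {f : ℝ → ℝ} {a : ℝ} (h : IsLocalMax f a)
    (hc : ContinuousAt f a) : deriv (deriv f) a ≤ 0 := by
  by_contra! hpos
  have hmin : IsLocalMin f a := isLocalMin_of_deriv_deriv_pos hpos h.deriv_eq_zero hc
  have hconst : f =ᶠ[𝓝 a] fun _ => f a :=
    (hmin.and h).mono fun x hx => le_antisymm hx.2 hx.1
  have hzero : deriv (deriv f) a = 0 := by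
    rw [hconst.deriv.deriv_eq]
    simp
  exact hpos.ne' hzero

theorem IsLocalMin.deriv_deriv_nonneg {f : ℝ → ℝ} {a : ℝ} (h : IsLocalMin f a)
    (hc : ContinuousAt f a) : 0 ≤ deriv (deriv f) a := by
  have hneg := h.neg.deriv_deriv_nonpos hc.neg
  simpa [deriv.fun_neg'] using hneg

namespace Function.Periodic

variable {α : Type*} [LinearOrder α] [TopologicalSpace α] [OrderClosedTopology α]
  {f : ℝ → α} {T : ℝ}

theorem exists_forall_ge_of_continuous (hp : Periodic f T) (hT : T ≠ 0) (hf : Continuous f) :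
    ∃ a, ∀ x, f x ≤ f a := by
  obtain ⟨_, ⟨a, rfl⟩, ha⟩ := (hp.compact_of_continuous hT hf).exists_isGreatest (range_nonempty f)
  exact ⟨a, fun x => ha (mem_range_self x)⟩

theorem exists_forall_le_of_continuous (hp : Periodic f T) (hT : T ≠ 0) (hf : Continuous f) :
    ∃ a, ∀ x, f a ≤ f x := by
  obtain ⟨_, ⟨a, rfl⟩, ha⟩ := (hp.compact_of_continuous hT hf).exists_isLeast (range_nonempty f)
  exact ⟨a, fun x => ha (mem_range_self x)⟩

end Function.Periodic

theorem is_const_of_deriv_deriv_eq_zero {f : ℝ → ℝ} (hf : Differentiable ℝ f)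
    (hf' : Differentiable ℝ (deriv f)) (h : ∀ x, deriv (deriv f) x = 0) {a : ℝ}
    (ha : deriv f a = 0) (x y : ℝ) : f x = f y :=
  is_const_of_deriv_eq_zero hf (fun z => (is_const_of_deriv_eq_zero hf' h z a).trans ha) x y

/-- Rigidity for the fluid–fluid interface when the denser fluid lies below:
a `2π`-periodic `C²` solution of `γ·κ(f) + c·f = d` with `γ > 0` and `c ≤ 0`
is constant. -/
theorem stmt_16 (γ c d : ℝ) (hγ : 0 < γ) (hc : c ≤ 0)
    (f : ℝ → ℝ) (hreg : ContDiff ℝ 2 f)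
    (hper : ∀ x : ℝ, f (x + 2 * Real.pi) = f x)
    (heq : ∀ x : ℝ,
      γ * deriv (deriv f) x / (1 + deriv f x ^ 2) ^ ((3 : ℝ) / 2) + c * f x = d) :
    ∃ C : ℝ, ∀ x : ℝ, f x = C := by
  have hT : 2 * Real.pi ≠ 0 := Real.two_pi_pos.ne'
  obtain ⟨x₀, hmax⟩ := Function.Periodic.exists_forall_ge_of_continuous hper hT hreg.continuous
  obtain ⟨x₁, hmin⟩ := Function.Periodic.exists_forall_le_of_continuous hper hT hreg.continuous
  have hloc₀ : IsLocalMax f x₀ := Eventually.of_forall hmax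
  have hloc₁ : IsLocalMin f x₁ := Eventually.of_forall hmin
  have hD : ∀ x, 0 < (1 + deriv f x ^ 2) ^ ((3 : ℝ) / 2) := fun x => by positivity
  have hd₀ : d ≤ c * f x₀ := by
    have hf'' := hloc₀.deriv_deriv_nonpos hreg.continuous.continuousAt
    have := div_nonpos_of_nonpos_of_nonneg (mul_nonpos_of_nonneg_of_nonpos hγ.le hf'') (hD x₀).le
    linarith [heq x₀]
  have hd₁ : c * f x₁ ≤ d := by
    have hf'' := hloc₁.deriv_deriv_nonneg hreg.continuous.continuousAt
    have := div_nonneg (mul_nonneg hγ.le hf'') (hD x₁).le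
    linarith [heq x₁]
  rcases hc.lt_or_eq with hc | rfl
  · have hmax_le_min : f x₀ ≤ f x₁ := (mul_le_mul_left_of_neg hc).1 (hd₁.trans hd₀)
    exact ⟨f x₀, fun x => le_antisymm (hmax x) (hmax_le_min.trans (hmin x))⟩
  · have hd : d = 0 := by
      simp only [zero_mul] at hd₀ hd₁
      exact le_antisymm hd₀ hd₁
    have hf'' : ∀ x, deriv (deriv f) x = 0 := fun x => by
      simpa [hd, hγ.ne', (hD x).ne'] using heq x
    exact ⟨f x₀, fun x => is_const_of_deriv_deriv_eq_zero (hreg.differentiable (by norm_num))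
      hreg.differentiable_deriv_two hf'' hloc₀.deriv_eq_zero x x₀⟩
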